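/- arXiv:2210.13386 — 9 statements merged into one kernel-verified Lean document; each statement's English description precedes it below -/
import Mathlib

section
/- For the binary randomized response mechanism K with parameter κ = e^ε/(1+e^ε) (i.e., K(·|1) = Bernoulli(κ) and K(·|0) = Bernoulli(1-κ)), and input distributions P = Bernoulli(α), Q = Bernoulli(1/2), the chi-squared divergence satisfies χ²(PK‖QK) = ((e^ε-1)/(e^ε+1))² · χ²(P‖Q), and moreover χ²(P‖Q) = 4(α - 1/2)². -/
lemma aux0 (e α : ℝ) (he : 0 < e) :
    let κ : ℝ := e / (1 + e)
    (α * κ + (1 - α) * (1 - κ) - 1 / 2) ^ 2 / (1 / 2 * (1 - 1 / 2))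
      = ((e - 1) / (e + 1)) ^ 2 * ((α - 1 / 2) ^ 2 / (1 / 2 * (1 - 1 / 2))) := by
  have h1 : (1 : ℝ) + e ≠ 0 := by positivity
  have h2 : e + 1 ≠ 0 := by positivity
  simp only
  field_simp
  ring

/-- Binary randomized response: χ²(PK‖QK) = ((e^ε-1)/(e^ε+1))² χ²(P‖Q),
and χ²(P‖Q) = 4(α-1/2)², where P = Bernoulli(α), Q = Bernoulli(1/2),
K(·|1) = Bernoulli(κ), K(·|0) = Bernoulli(1-κ), κ = e^ε/(1+e^ε).
χ²(Bernoulli(p)‖Bernoulli(q)) = (p-q)²/(q(1-q)). -/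
theorem stmt0 (ε α : ℝ) (hε : 0 ≤ ε) (hα0 : 0 ≤ α) (hα1 : α ≤ 1) :
    let κ : ℝ := Real.exp ε / (1 + Real.exp ε)
    let chi2 : ℝ → ℝ → ℝ := fun p q => (p - q) ^ 2 / (q * (1 - q))
    chi2 (α * κ + (1 - α) * (1 - κ)) ((1 / 2) * κ + (1 / 2) * (1 - κ))
        = ((Real.exp ε - 1) / (Real.exp ε + 1)) ^ 2 * chi2 α (1 / 2)
      ∧ chi2 α (1 / 2) = 4 * (α - 1 / 2) ^ 2 := by
  intro κ chi2
  have hq : (1 / 2 : ℝ) * κ + (1 / 2) * (1 - κ) = 1 / 2 := by ring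
  constructor
  · simp only [chi2, hq]
    exact aux0 (Real.exp ε) α (Real.exp_pos ε)
  · simp only [chi2]; ring
end

section
/- Let ε ≥ 0. The supremum of p - q over all p, q ∈ [0,1] satisfying q ≤ p ≤ min{q·e^ε, q·e^{-ε} + 1 - e^{-ε}} equals (e^ε - 1)²·e^{-ε}/(e^ε - e^{-ε}) when ε > 0 (and equals 0 when ε = 0), which simplifies to (e^ε-1)/(e^ε+1). -/
/-!
Write `E = e^ε`. The first constraint gives `p - q ≤ (E - 1) q`, and the second, multiplied by `E`,
gives `E (p - q) ≤ (E - 1) (1 - q)`. Adding them eliminates `q`: `(E + 1) (p - q) ≤ E - 1`.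
Both constraints are tight at `p = E / (E + 1)`, `q = 1 / (E + 1)`, so the bound is attained.
-/

theorem sub_le_of_le_mul_of_le_mul_inv_add {E p q : ℝ} (hE : 0 < E) (h₁ : p ≤ q * E)
    (h₂ : p ≤ q * E⁻¹ + 1 - E⁻¹) : p - q ≤ (E - 1) / (E + 1) := by
  have hscaled : E * (q * E⁻¹ + 1 - E⁻¹) = q + E - 1 := by
    field_simp
  have h₂' : E * p ≤ q + E - 1 := hscaled ▸ mul_le_mul_of_nonneg_left h₂ hE.le
  rw [le_div_iff₀ (by linarith)]
  linarith

theorem isGreatest_sub_of_le_min {E : ℝ} (hE : 1 ≤ E) :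
    IsGreatest {d : ℝ | ∃ p q : ℝ, 0 ≤ p ∧ p ≤ 1 ∧ 0 ≤ q ∧ q ≤ 1 ∧ q ≤ p ∧
        p ≤ min (q * E) (q * E⁻¹ + 1 - E⁻¹) ∧ d = p - q}
      ((E - 1) / (E + 1)) := by
  have hE_pos : 0 < E := by linarith
  have hE_add : 0 < E + 1 := by linarith
  constructor
  · refine ⟨E / (E + 1), 1 / (E + 1), by positivity, ?_, by positivity, ?_, ?_, ?_, ?_⟩
    · rw [div_le_one hE_add]; linarith
    · rw [div_le_one hE_add]; linarith
    · gcongr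
    · refine le_min (le_of_eq ?_) (le_of_eq ?_)
      · field_simp
      · field_simp
        ring
    · field_simp
  · rintro d ⟨p, q, -, -, -, -, -, hp, rfl⟩
    rw [le_min_iff] at hp
    exact sub_le_of_le_mul_of_le_mul_inv_add hE_pos hp.1 hp.2

theorem sub_one_sq_mul_inv_div_sub_inv {E : ℝ} (hE_pos : 0 < E) (hE_ne : E ≠ 1) :
    (E - 1) ^ 2 * E⁻¹ / (E - E⁻¹) = (E - 1) / (E + 1) := by
  have hsub : E - 1 ≠ 0 := sub_ne_zero.mpr hE_ne
  have hadd : E + 1 ≠ 0 := by positivity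
  have hdiff : E - E⁻¹ = (E - 1) * (E + 1) / E := by
    field_simp
    ring
  rw [hdiff]
  field_simp

/-- The supremum of p - q over p, q ∈ [0,1] with
q ≤ p ≤ min{q e^ε, q e^{-ε} + 1 - e^{-ε}} is attained and equals (e^ε-1)/(e^ε+1);
moreover for ε > 0 this equals (e^ε-1)² e^{-ε} / (e^ε - e^{-ε}). -/
theorem stmt1 (ε : ℝ) (hε : 0 ≤ ε) :
    IsGreatest {d : ℝ | ∃ p q : ℝ, 0 ≤ p ∧ p ≤ 1 ∧ 0 ≤ q ∧ q ≤ 1 ∧ q ≤ p ∧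
        p ≤ min (q * Real.exp ε) (q * Real.exp (-ε) + 1 - Real.exp (-ε)) ∧ d = p - q}
      ((Real.exp ε - 1) / (Real.exp ε + 1))
    ∧ (0 < ε →
        (Real.exp ε - 1) ^ 2 * Real.exp (-ε) / (Real.exp ε - Real.exp (-ε))
          = (Real.exp ε - 1) / (Real.exp ε + 1)) := by
  rw [Real.exp_neg]
  refine ⟨isGreatest_sub_of_le_min (Real.one_le_exp hε), fun hε₀ => ?_⟩
  exact sub_one_sq_mul_inv_div_sub_inv (Real.exp_pos ε) (Real.exp_eq_one_iff ε |>.not.mpr hε₀.ne')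
end

section
/- For two Bernoulli distributions M = Bernoulli(p) and N = Bernoulli(q), the total variation distance satisfies TV(M, N) = |p - q|, and if both p ≤ q·e^ε, 1-p ≤ (1-q)·e^ε, q ≤ p·e^ε, 1-q ≤ (1-p)·e^ε hold, then TV(M, N) ≤ (e^ε-1)/(e^ε+1). -/
/-- For Bernoulli measures M = Bernoulli(p), N = Bernoulli(q) on {0,1},
TV(M,N) = |p-q|, and if p ≤ q e^ε, 1-p ≤ (1-q) e^ε, q ≤ p e^ε, 1-q ≤ (1-p) e^ε,
then TV(M,N) ≤ (e^ε-1)/(e^ε+1). -/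
theorem stmt2 (ε p q : ℝ) (hε : 0 ≤ ε) (hp0 : 0 ≤ p) (hp1 : p ≤ 1)
    (hq0 : 0 ≤ q) (hq1 : q ≤ 1) :
    let M : Bool → ℝ := fun b => if b then p else 1 - p
    let N : Bool → ℝ := fun b => if b then q else 1 - q
    let tv : ℝ := (1 / 2) * ∑ b : Bool, |M b - N b|
    tv = |p - q|
    ∧ (p ≤ q * Real.exp ε → 1 - p ≤ (1 - q) * Real.exp ε →
        q ≤ p * Real.exp ε → 1 - q ≤ (1 - p) * Real.exp ε →
        tv ≤ (Real.exp ε - 1) / (Real.exp ε + 1)) := by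
  intro M N tv
  have hE : (1:ℝ) ≤ Real.exp ε := Real.one_le_exp hε
  have htv : tv = |p - q| := by
    show (1/2 : ℝ) * ∑ b : Bool, |M b - N b| = |p - q|
    simp only [M, N, Fintype.sum_bool]
    norm_num
    rw [abs_sub_comm q p]
    ring
  refine ⟨htv, fun h1 h2 h3 h4 => ?_⟩
  rw [htv]
  have hden : (0:ℝ) < Real.exp ε + 1 := by linarith
  set E := Real.exp ε with hEdef
  have k1 : (p - q) * (E + 1) ≤ E - 1 := by nlinarith [h1, h4]
  have k2 : (q - p) * (E + 1) ≤ E - 1 := by nlinarith [h3, h2]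
  rw [abs_le]
  constructor
  · rw [neg_le, neg_sub]
    exact (le_div_iff₀ hden).mpr k2
  · exact (le_div_iff₀ hden).mpr k1
end

section
/- For any two probability measures M and N on a measurable space, the squared Hellinger distance admits the integral representation H²(M,N) = (1/2) ∫₁^∞ [E_γ(M‖N) + E_γ(N‖M)] γ^{-3/2} dγ, where E_γ denotes the hockey-stick divergence. -/
/-!
Pointwise, for `0 ≤ b ≤ a` the hockey-stick term `(b - γ a)₊` vanishes for `γ ≥ 1`, while
`(a - γ b)₊` is supported on `[1, a / b]`, where `-2a γ^{-1/2} - 2b γ^{1/2}` is a primitive of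
`(a - γ b) γ^{-3/2}`; this gives
`∫₁^∞ ((a - γb)₊ + (b - γa)₊) γ^{-3/2} dγ = 2 (√a - √b)²`.
Integrating over `x` and exchanging the two integrals (Fubini, justified by
`(√a - √b)² ≤ a + b`) yields the identity.
-/

open MeasureTheory Set

lemma hasDerivAt_hockeyStick_primitive (a b : ℝ) {γ : ℝ} (hγ : 0 < γ) :
    HasDerivAt (fun γ : ℝ => -2 * a * γ ^ (-(1 : ℝ) / 2) - 2 * b * γ ^ ((1 : ℝ) / 2))
      ((a - γ * b) * γ ^ (-(3 : ℝ) / 2)) γ := by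
  have h := ((Real.hasDerivAt_rpow_const (p := -(1 : ℝ) / 2) (Or.inl hγ.ne')).const_mul
    (-2 * a)).sub ((Real.hasDerivAt_rpow_const (p := (1 : ℝ) / 2) (Or.inl hγ.ne')).const_mul
    (2 * b))
  refine h.congr_deriv ?_
  have hγγ : γ * γ ^ (-(3 : ℝ) / 2) = γ ^ ((1 : ℝ) / 2 - 1) := by
    rw [← Real.rpow_one_add' hγ.le (by norm_num)]; norm_num
  rw [show -(1 : ℝ) / 2 - 1 = -(3 : ℝ) / 2 by norm_num, ← hγγ]
  ring

lemma integral_sub_mul_mul_rpow_neg_three_halves {a b : ℝ} (ha : 0 < a) (hb : 0 < b)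
    (hba : b ≤ a) :
    ∫ γ in (1 : ℝ)..a / b, (a - γ * b) * γ ^ (-(3 : ℝ) / 2) = 2 * (√a - √b) ^ 2 := by
  have hc : 1 ≤ a / b := (one_le_div hb).mpr hba
  have hpos : ∀ γ ∈ uIcc 1 (a / b), 0 < γ := fun γ hγ => by
    rw [uIcc_of_le hc] at hγ; linarith [hγ.1]
  rw [intervalIntegral.integral_eq_sub_of_hasDerivAt
    (fun γ hγ => hasDerivAt_hockeyStick_primitive a b (hpos γ hγ))
    ((ContinuousOn.mul (by fun_prop)
      (continuousOn_id.rpow_const fun γ hγ => Or.inl (hpos γ hγ).ne')).intervalIntegrable)]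
  have hsqrt : (a / b) ^ ((1 : ℝ) / 2) = √a / √b := by
    rw [← Real.sqrt_eq_rpow, Real.sqrt_div ha.le]
  have hsqrt_inv : (a / b) ^ (-(1 : ℝ) / 2) = √b / √a := by
    rw [neg_div, Real.rpow_neg (by positivity), hsqrt, inv_div]
  have hsa : 0 < √a := Real.sqrt_pos.mpr ha
  have hsb : 0 < √b := Real.sqrt_pos.mpr hb
  rw [hsqrt, hsqrt_inv, Real.one_rpow, Real.one_rpow]
  field_simp
  nlinarith [Real.sq_sqrt ha.le, Real.sq_sqrt hb.le]

lemma integral_Ioi_max_sub_mul_mul_rpow_neg_three_halves {a b : ℝ} (hb : 0 ≤ b)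
    (hba : b ≤ a) :
    IntegrableOn (fun γ => max (a - γ * b) 0 * γ ^ (-(3 : ℝ) / 2)) (Ioi 1) ∧
      ∫ γ in Ioi 1, max (a - γ * b) 0 * γ ^ (-(3 : ℝ) / 2) = 2 * (√a - √b) ^ 2 := by
  have ha : 0 ≤ a := hb.trans hba
  rcases hb.eq_or_lt with rfl | hb
  · simp only [mul_zero, sub_zero, max_eq_left ha, Real.sqrt_zero, Real.sq_sqrt ha]
    refine ⟨(integrableOn_Ioi_rpow_of_lt (by norm_num) one_pos).const_mul a, ?_⟩
    rw [integral_const_mul, integral_Ioi_rpow_of_lt (by norm_num) one_pos, Real.one_rpow]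
    ring
  have hc : 1 ≤ a / b := (one_le_div hb).mpr hba
  have hvanish :
      ∀ γ ∈ Ioi 1 \ Ioc 1 (a / b), max (a - γ * b) 0 * γ ^ (-(3 : ℝ) / 2) = 0 := by
    rintro γ ⟨hγ, hγc⟩
    have : a < γ * b := (div_lt_iff₀ hb).mp (not_le.mp fun h => hγc ⟨hγ, h⟩)
    rw [max_eq_right (by linarith), zero_mul]
  have hint : IntegrableOn (fun γ => max (a - γ * b) 0 * γ ^ (-(3 : ℝ) / 2)) (Ioc 1 (a / b)) :=
    (ContinuousOn.integrableOn_Icc (ContinuousOn.mul (by fun_prop)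
      (continuousOn_id.rpow_const fun γ hγ => Or.inl (zero_lt_one.trans_le hγ.1).ne'))).mono_set
      Ioc_subset_Icc_self
  refine ⟨hint.of_forall_sdiff_eq_zero measurableSet_Ioi hvanish, ?_⟩
  rw [setIntegral_eq_of_subset_of_forall_sdiff_eq_zero measurableSet_Ioi Ioc_subset_Ioi_self
    hvanish, ← intervalIntegral.integral_of_le hc,
    ← integral_sub_mul_mul_rpow_neg_three_halves (hb.trans_le hba) hb hba]
  refine intervalIntegral.integral_congr fun γ hγ => ?_
  rw [uIcc_of_le hc] at hγ
  have : γ * b ≤ a := (le_div_iff₀ hb).mp hγ.2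
  simp only [max_eq_left (sub_nonneg.mpr this)]

noncomputable def hockeyStickIntegrand (a b γ : ℝ) : ℝ :=
  (max (a - γ * b) 0 + max (b - γ * a) 0) * γ ^ (-(3 : ℝ) / 2)

lemma hockeyStickIntegrand_comm (a b : ℝ) : hockeyStickIntegrand a b = hockeyStickIntegrand b a :=
  funext fun γ => by rw [hockeyStickIntegrand, hockeyStickIntegrand, add_comm]

lemma hockeyStickIntegrand_nonneg (a b : ℝ) {γ : ℝ} (hγ : 0 ≤ γ) :
    0 ≤ hockeyStickIntegrand a b γ := by
  unfold hockeyStickIntegrand; positivity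

lemma integral_Ioi_hockeyStickIntegrand {a b : ℝ} (ha : 0 ≤ a) (hb : 0 ≤ b) :
    IntegrableOn (hockeyStickIntegrand a b) (Ioi 1) ∧
      ∫ γ in Ioi 1, hockeyStickIntegrand a b γ = 2 * (√a - √b) ^ 2 := by
  wlog hba : b ≤ a generalizing a b
  · rw [hockeyStickIntegrand_comm, sub_sq_comm]
    exact this hb ha (le_of_not_ge hba)
  have heq : EqOn (hockeyStickIntegrand a b)
      (fun γ => max (a - γ * b) 0 * γ ^ (-(3 : ℝ) / 2)) (Ioi 1) := fun γ hγ => by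
    have : b - γ * a ≤ 0 := by nlinarith [mem_Ioi.mp hγ]
    rw [hockeyStickIntegrand, max_eq_right this, add_zero]
  obtain ⟨hint, hval⟩ := integral_Ioi_max_sub_mul_mul_rpow_neg_three_halves hb hba
  exact ⟨hint.congr_fun heq.symm measurableSet_Ioi,
    (setIntegral_congr_fun measurableSet_Ioi heq).trans hval⟩

lemma sq_sqrt_sub_sqrt_le_add {a b : ℝ} (ha : 0 ≤ a) (hb : 0 ≤ b) :
    (√a - √b) ^ 2 ≤ a + b := by
  nlinarith [Real.sq_sqrt ha, Real.sq_sqrt hb, Real.sqrt_nonneg a, Real.sqrt_nonneg b]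

theorem integral_sq_sqrt_sub_sqrt_eq_integral_hockeyStick {α : Type*} [MeasurableSpace α]
    (μ : Measure α) [SFinite μ] {f g : α → ℝ} (hf : Measurable f) (hg : Measurable g)
    (hf0 : ∀ x, 0 ≤ f x) (hg0 : ∀ x, 0 ≤ g x)
    (hfi : Integrable f μ) (hgi : Integrable g μ) :
    ∫ x, (√(f x) - √(g x)) ^ 2 ∂μ
      = (1 / 2) * ∫ γ in Ioi (1 : ℝ),
          ((∫ x, max (f x - γ * g x) 0 ∂μ) + (∫ x, max (g x - γ * f x) 0 ∂μ))
            * γ ^ (-(3 : ℝ) / 2) := by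
  have hsection x := integral_Ioi_hockeyStickIntegrand (hf0 x) (hg0 x)
  have hsq_int : Integrable (fun x => (√(f x) - √(g x)) ^ 2) μ :=
    (hfi.add hgi).mono' (by fun_prop) (ae_of_all _ fun x => by
      rw [Real.norm_of_nonneg (sq_nonneg _)]; exact sq_sqrt_sub_sqrt_le_add (hf0 x) (hg0 x))
  have hprod : Integrable (Function.uncurry fun x γ => hockeyStickIntegrand (f x) (g x) γ)
      (μ.prod (volume.restrict (Ioi 1))) := by
    refine (integrable_prod_iff (by unfold hockeyStickIntegrand; fun_prop)).mpr
      ⟨ae_of_all _ fun x => (hsection x).1, ?_⟩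
    refine (hsq_int.const_mul 2).congr (ae_of_all _ fun x => ?_)
    dsimp only [Function.uncurry_apply_pair]
    rw [← (hsection x).2]
    exact setIntegral_congr_fun measurableSet_Ioi fun γ hγ =>
      (Real.norm_of_nonneg (hockeyStickIntegrand_nonneg _ _ (zero_le_one.trans hγ.le))).symm
  have hpos_part_int (u v : α → ℝ) (hu : Integrable u μ) (hv : Integrable v μ) (γ : ℝ) :
      Integrable (fun x => max (u x - γ * v x) 0) μ :=
    (hu.sub (hv.const_mul γ)).pos_part
  calc ∫ x, (√(f x) - √(g x)) ^ 2 ∂μ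
      = ∫ x, (1 / 2) * (∫ γ in Ioi (1 : ℝ), hockeyStickIntegrand (f x) (g x) γ) ∂μ :=
        integral_congr_ae (ae_of_all _ fun x => by dsimp only; rw [(hsection x).2]; ring)
    _ = (1 / 2) * ∫ γ in Ioi (1 : ℝ), ∫ x, hockeyStickIntegrand (f x) (g x) γ ∂μ := by
        rw [integral_const_mul, integral_integral_swap hprod]
    _ = _ := by
        congr 1
        refine integral_congr_ae (ae_of_all _ fun γ => ?_)
        dsimp only
        rw [← integral_add (hpos_part_int f g hfi hgi γ) (hpos_part_int g f hgi hfi γ),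
          ← integral_mul_const]
        rfl

theorem stmt3_general {α : Type*} [MeasurableSpace α] (μ : Measure α) (f g : α → ℝ)
    (hf : Measurable f) (hg : Measurable g)
    (hf0 : ∀ x, 0 ≤ f x) (hg0 : ∀ x, 0 ≤ g x)
    (hfi : Integrable f μ) (hgi : Integrable g μ) :
    ∫ x, (Real.sqrt (f x) - Real.sqrt (g x)) ^ 2 ∂μ
      = (1 / 2) * ∫ γ in Set.Ioi (1 : ℝ),
          ((∫ x, max (f x - γ * g x) 0 ∂μ) + (∫ x, max (g x - γ * f x) 0 ∂μ))
            * γ ^ (-(3 : ℝ) / 2) := by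
  -- Fubini needs an s-finite measure: `f + g` vanishes off a set `t` on which `μ` is σ-finite,
  -- and every integrand vanishes where `f = g = 0`.
  obtain ⟨t, -, hsum_zero, ht⟩ := ((memLp_one_iff_integrable.mpr (hfi.add hgi))
    |>.finStronglyMeasurable_of_stronglyMeasurable (hf.add hg).stronglyMeasurable one_ne_zero
      ENNReal.one_ne_top).exists_set_sigmaFinite
  have hzero x (hx : x ∉ t) : f x = 0 ∧ g x = 0 := by
    have := hsum_zero x hx
    simp only [Pi.add_apply] at this
    constructor <;> linarith [hf0 x, hg0 x]
  have hrestrict {F : α → ℝ} (hF : ∀ x, f x = 0 → g x = 0 → F x = 0) :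
      ∫ x in t, F x ∂μ = ∫ x, F x ∂μ :=
    setIntegral_eq_integral_of_forall_compl_eq_zero fun x hx => hF x (hzero x hx).1 (hzero x hx).2
  rw [← hrestrict (fun x hfx hgx => by simp [hfx, hgx]),
    integral_sq_sqrt_sub_sqrt_eq_integral_hockeyStick (μ.restrict t) hf hg hf0 hg0 hfi.restrict
      hgi.restrict]
  congr 1
  refine setIntegral_congr_fun measurableSet_Ioi fun γ _ => ?_
  rw [hrestrict (fun x hfx hgx => by simp [hfx, hgx]),
    hrestrict (fun x hfx hgx => by simp [hfx, hgx])]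

/-- Integral representation of the squared Hellinger distance in terms of
hockey-stick divergences: for probability measures M, N with densities f, g
with respect to a common dominating measure μ,
H²(M,N) = (1/2)∫₁^∞ [E_γ(M‖N) + E_γ(N‖M)] γ^{-3/2} dγ, where
H²(M,N) = ∫ (√f - √g)² dμ and E_γ(M‖N) = ∫ (f - γ g)₊ dμ. -/
theorem stmt3 {α : Type*} [MeasurableSpace α] (μ : Measure α) (f g : α → ℝ)
    (hf : Measurable f) (hg : Measurable g)
    (hf0 : ∀ x, 0 ≤ f x) (hg0 : ∀ x, 0 ≤ g x)
    (hfi : Integrable f μ) (hgi : Integrable g μ)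
    (hf1 : ∫ x, f x ∂μ = 1) (hg1 : ∫ x, g x ∂μ = 1) :
    ∫ x, (Real.sqrt (f x) - Real.sqrt (g x)) ^ 2 ∂μ
      = (1 / 2) * ∫ γ in Set.Ioi (1 : ℝ),
          ((∫ x, max (f x - γ * g x) 0 ∂μ) + (∫ x, max (g x - γ * f x) 0 ∂μ))
            * γ ^ (-(3 : ℝ) / 2) :=
  stmt3_general μ f g hf hg hf0 hg0 hfi hgi
end

section
/- For any two probability measures M and N, the chi-squared divergence admits the integral representation χ²(M‖N) = 2 ∫₁^∞ [E_γ(M‖N) + γ^{-3} E_γ(N‖M)] dγ. -/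
/-!
For `a ≥ 0` and `b > 0`, the function
`γ ↦ -((a - γ b)₊² + (b / γ - a)₊²) / (2 b)` is an antiderivative of
`γ ↦ (a - γ b)₊ + γ⁻³ (b - γ a)₊` on `[1, ∞)` that vanishes at infinity and equals
`-(a - b)² / (2 b)` at `1`. Hence `(a - b)² / b = 2 ∫₁^∞ [(a - γ b)₊ + γ⁻³ (b - γ a)₊] dγ`
pointwise, and the theorem follows by integrating in `x` and exchanging the integrals (Tonelli),
after restricting `μ` to a σ-finite set off which `f` and `g` vanish.
-/

open MeasureTheory Set Filter Topology Asymptotics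

theorem hasDerivAt_max_zero_sq (x : ℝ) :
    HasDerivAt (fun y : ℝ => max y 0 ^ 2) (2 * max x 0) x := by
  rcases lt_trichotomy x 0 with hx | rfl | hx
  · have h : (fun y : ℝ => max y 0 ^ 2) =ᶠ[𝓝 x] fun _ => 0 := by
      filter_upwards [eventually_lt_nhds hx] with y hy
      simp [max_eq_right hy.le]
    simpa [max_eq_right hx.le] using (hasDerivAt_const x (0 : ℝ)).congr_of_eventuallyEq h
  · rw [hasDerivAt_iff_isLittleO_nhds_zero]
    refine (IsBigO.of_bound 1 (Eventually.of_forall fun h => ?_)).trans_isLittleO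
      (isLittleO_pow_id (𝕜 := ℝ) one_lt_two)
    simp only [zero_add, max_self, ne_eq, OfNat.ofNat_ne_zero, not_false_eq_true, zero_pow,
      sub_zero, mul_zero, smul_eq_mul, norm_pow, Real.norm_eq_abs, one_mul]
    have : |max h 0| ≤ |h| := by simpa using abs_max_le_max_abs_abs (a := h) (b := 0)
    exact pow_le_pow_left₀ (abs_nonneg _) this 2
  · have h : (fun y : ℝ => max y 0 ^ 2) =ᶠ[𝓝 x] fun y => y ^ 2 := by
      filter_upwards [eventually_gt_nhds hx] with y hy
      simp [max_eq_left hy.le]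
    simpa [max_eq_left hx.le] using (hasDerivAt_pow 2 x).congr_of_eventuallyEq h

theorem HasDerivAt.max_zero_sq {u : ℝ → ℝ} {u' x : ℝ} (hu : HasDerivAt u u' x) :
    HasDerivAt (fun y => max (u y) 0 ^ 2) (2 * max (u x) 0 * u') x :=
  (hasDerivAt_max_zero_sq (u x)).comp x hu

theorem rpow_neg_three_mul_max_sub {a b γ : ℝ} (hγ : 0 < γ) :
    γ ^ (-3 : ℝ) * max (b - γ * a) 0 = max (b / γ - a) 0 / γ ^ 2 := by
  have : max (b - γ * a) 0 = γ * max (b / γ - a) 0 := by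
    rw [mul_max_of_nonneg _ _ hγ.le, mul_zero, mul_sub, mul_div_cancel₀ _ hγ.ne']
  rw [this, Real.rpow_neg hγ.le]
  norm_num
  field_simp

theorem integral_Ioi_one_max_sub_add {a b : ℝ} (ha : 0 ≤ a) (hb : 0 < b) :
    IntegrableOn (fun γ => max (a - γ * b) 0 + γ ^ (-3 : ℝ) * max (b - γ * a) 0) (Ioi 1) ∧
      ∫ γ in Ioi 1, (max (a - γ * b) 0 + γ ^ (-3 : ℝ) * max (b - γ * a) 0)
        = (a - b) ^ 2 / (2 * b) := by
  set F : ℝ → ℝ := fun γ => -(max (a - γ * b) 0 ^ 2 + max (b / γ - a) 0 ^ 2) / (2 * b)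
  have hF : ∀ γ ∈ Ici (1 : ℝ),
      HasDerivAt F (max (a - γ * b) 0 + γ ^ (-3 : ℝ) * max (b - γ * a) 0) γ := by
    intro γ hγ
    have hγ0 : 0 < γ := zero_lt_one.trans_le hγ
    have hd₁ := (((hasDerivAt_id' γ).mul_const b).const_sub a).max_zero_sq
    have hd₂ :=
      (((hasDerivAt_const γ b).fun_div (hasDerivAt_id' γ) hγ0.ne').sub_const a).max_zero_sq
    refine ((hd₁.add hd₂).neg.div_const (2 * b)).congr_deriv ?_
    rw [rpow_neg_three_mul_max_sub hγ0]
    field_simp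
    ring
  have hnonneg : ∀ γ ∈ Ioi (1 : ℝ), 0 ≤ max (a - γ * b) 0 + γ ^ (-3 : ℝ) * max (b - γ * a) 0 :=
    fun γ hγ => by have : 0 < γ := zero_lt_one.trans hγ; positivity
  have hlim : Tendsto F atTop (𝓝 0) := by
    have hleft : ∀ᶠ γ in atTop, max (a - γ * b) 0 = 0 := by
      filter_upwards [eventually_ge_atTop (a / b)] with γ hγ
      exact max_eq_right (by rw [div_le_iff₀ hb] at hγ; linarith)
    have hright : Tendsto (fun γ => max (b / γ - a) 0) atTop (𝓝 0) := by
      simpa [ha] using (((tendsto_const_nhds (x := b)).div_atTop tendsto_id).sub_const a).max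
        (tendsto_const_nhds (x := (0 : ℝ)))
    have := ((tendsto_const_nhds (x := (0 : ℝ) ^ 2)).add (hright.pow 2)).neg.div_const (2 * b)
    simpa using this.congr' (hleft.mono fun γ hγ => by simp [F, hγ])
  refine ⟨integrableOn_Ioi_deriv_of_nonneg' hF hnonneg hlim, ?_⟩
  rw [integral_Ioi_of_hasDerivAt_of_nonneg' hF hnonneg hlim]
  rcases le_total a b with hab | hab
  · simp [F, max_eq_right (sub_nonpos.2 hab), max_eq_left (sub_nonneg.2 hab)]
    ring
  · simp [F, max_eq_left (sub_nonneg.2 hab), max_eq_right (sub_nonpos.2 hab)]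
    ring

theorem ofReal_sq_sub_div_eq_two_mul_lintegral {a b : ℝ} (ha : 0 ≤ a) (hb : 0 ≤ b)
    (hab : b = 0 → a = 0) :
    ENNReal.ofReal ((a - b) ^ 2 / b) = 2 * ∫⁻ γ in Ioi 1,
      ENNReal.ofReal (max (a - γ * b) 0 + γ ^ (-3 : ℝ) * max (b - γ * a) 0) := by
  rcases hb.eq_or_lt with rfl | hb
  · simp [hab rfl]
  obtain ⟨hint, heq⟩ := integral_Ioi_one_max_sub_add ha hb
  have hnonneg : ∀ᵐ γ ∂(volume.restrict (Ioi (1 : ℝ))),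
      0 ≤ max (a - γ * b) 0 + γ ^ (-3 : ℝ) * max (b - γ * a) 0 :=
    (ae_restrict_mem measurableSet_Ioi).mono fun γ (hγ : 1 < γ) => by
      have : 0 < γ := zero_lt_one.trans hγ
      positivity
  rw [← ofReal_integral_eq_lintegral_ofReal hint hnonneg, heq, ← ENNReal.ofReal_ofNat 2,
    ← ENNReal.ofReal_mul zero_le_two]
  field_simp

theorem MeasureTheory.Integrable.exists_set_sigmaFinite {α : Type*} [MeasurableSpace α]
    {μ : Measure α} {f : α → ℝ} (hfi : Integrable f μ) (hf : StronglyMeasurable f) :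
    ∃ t, MeasurableSet t ∧ (∀ x ∈ tᶜ, f x = 0) ∧ SigmaFinite (μ.restrict t) :=
  ((memLp_one_iff_integrable.2 hfi).finStronglyMeasurable_of_stronglyMeasurable hf one_ne_zero
    ENNReal.one_ne_top).exists_set_sigmaFinite

section HockeyStick

variable {α : Type*} [MeasurableSpace α] {μ : Measure α} {f g : α → ℝ}

/-- `E_γ(M‖N)` for measures `M`, `N` with densities `f`, `g` with respect to `μ`. -/
noncomputable def hockeyStick (μ : Measure α) (f g : α → ℝ) (γ : ℝ) : ℝ :=
  ∫ x, max (f x - γ * g x) 0 ∂μ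

theorem integrable_max_sub_mul (hfi : Integrable f μ) (hgi : Integrable g μ) (γ : ℝ) :
    Integrable (fun x => max (f x - γ * g x) 0) μ :=
  (hfi.sub (hgi.const_mul γ)).pos_part

theorem antitone_hockeyStick (hfi : Integrable f μ) (hgi : Integrable g μ)
    (hg0 : ∀ x, 0 ≤ g x) : Antitone (hockeyStick μ f g) := fun γ γ' hγ =>
  integral_mono (integrable_max_sub_mul hfi hgi γ') (integrable_max_sub_mul hfi hgi γ) fun x =>
    max_le_max (by nlinarith [hg0 x]) le_rfl

theorem hockeyStick_nonneg (γ : ℝ) : 0 ≤ hockeyStick μ f g γ :=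
  integral_nonneg fun x => le_max_right (f x - γ * g x) 0

theorem hockeyStick_restrict {t : Set α} (hft : ∀ x ∉ t, f x = 0) (hgt : ∀ x ∉ t, g x = 0)
    (γ : ℝ) : hockeyStick (μ.restrict t) f g γ = hockeyStick μ f g γ :=
  setIntegral_eq_integral_of_forall_compl_eq_zero fun x hx => by simp [hft x hx, hgt x hx]

theorem ofReal_hockeyStick_add_rpow_mul (hfi : Integrable f μ) (hgi : Integrable g μ)
    {γ : ℝ} (hγ : 0 ≤ γ) :
    ENNReal.ofReal (hockeyStick μ f g γ + γ ^ (-3 : ℝ) * hockeyStick μ g f γ)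
      = ∫⁻ x, ENNReal.ofReal
          (max (f x - γ * g x) 0 + γ ^ (-3 : ℝ) * max (g x - γ * f x) 0) ∂μ := by
  have hA := integrable_max_sub_mul hfi hgi γ
  have hB := (integrable_max_sub_mul hgi hfi γ).const_mul (γ ^ (-3 : ℝ))
  unfold hockeyStick
  rw [← integral_const_mul, ← integral_add hA hB]
  exact ofReal_integral_eq_lintegral_ofReal (hA.add hB)
    (Eventually.of_forall fun x => by positivity)

theorem integral_chiSq_eq_two_mul_integral_hockeyStick [SFinite μ]
    (hf : Measurable f) (hg : Measurable g) (hf0 : ∀ x, 0 ≤ f x) (hg0 : ∀ x, 0 ≤ g x)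
    (hfi : Integrable f μ) (hgi : Integrable g μ) (hac : ∀ x, g x = 0 → f x = 0) :
    ∫ x, (f x - g x) ^ 2 / g x ∂μ
      = 2 * ∫ γ in Ioi 1, (hockeyStick μ f g γ + γ ^ (-3 : ℝ) * hockeyStick μ g f γ) := by
  have hmeas : Measurable fun p : α × ℝ => ENNReal.ofReal
      (max (f p.1 - p.2 * g p.1) 0 + p.2 ^ (-3 : ℝ) * max (g p.1 - p.2 * f p.1) 0) := by
    fun_prop
  have hlintegral : ∫⁻ x, ENNReal.ofReal ((f x - g x) ^ 2 / g x) ∂μ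
      = 2 * ∫⁻ γ in Ioi 1,
        ENNReal.ofReal (hockeyStick μ f g γ + γ ^ (-3 : ℝ) * hockeyStick μ g f γ) := by
    calc ∫⁻ x, ENNReal.ofReal ((f x - g x) ^ 2 / g x) ∂μ
        = ∫⁻ x, 2 * (∫⁻ γ in Ioi 1, ENNReal.ofReal
            (max (f x - γ * g x) 0 + γ ^ (-3 : ℝ) * max (g x - γ * f x) 0)) ∂μ :=
          lintegral_congr fun x => ofReal_sq_sub_div_eq_two_mul_lintegral (hf0 x) (hg0 x) (hac x)
      _ = 2 * ∫⁻ γ in Ioi 1, ∫⁻ x, ENNReal.ofReal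
            (max (f x - γ * g x) 0 + γ ^ (-3 : ℝ) * max (g x - γ * f x) 0) ∂μ := by
          rw [lintegral_const_mul' _ _ ENNReal.ofNat_ne_top,
            lintegral_lintegral_swap hmeas.aemeasurable]
      _ = _ := by
          congr 1
          refine setLIntegral_congr_fun measurableSet_Ioi fun γ (hγ : 1 < γ) => ?_
          exact (ofReal_hockeyStick_add_rpow_mul hfi hgi (zero_le_one.trans hγ.le)).symm
  have hH : AEStronglyMeasurable
      (fun γ => hockeyStick μ f g γ + γ ^ (-3 : ℝ) * hockeyStick μ g f γ)
      (volume.restrict (Ioi 1)) :=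
    ((antitone_hockeyStick hfi hgi hg0).measurable.add ((measurable_id.pow_const _).mul
      (antitone_hockeyStick hgi hfi hf0).measurable)).aestronglyMeasurable
  have hHnonneg : ∀ᵐ γ ∂(volume.restrict (Ioi (1 : ℝ))),
      0 ≤ hockeyStick μ f g γ + γ ^ (-3 : ℝ) * hockeyStick μ g f γ :=
    (ae_restrict_mem measurableSet_Ioi).mono fun γ (hγ : 1 < γ) => by
      have : 0 ≤ γ := zero_le_one.trans hγ.le
      have := hockeyStick_nonneg (μ := μ) (f := f) (g := g) γ
      have := hockeyStick_nonneg (μ := μ) (f := g) (g := f) γ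
      positivity
  rw [integral_eq_lintegral_of_nonneg_ae
      (Eventually.of_forall fun x => div_nonneg (sq_nonneg _) (hg0 x))
      (by fun_prop : Measurable fun x => (f x - g x) ^ 2 / g x).aestronglyMeasurable,
    integral_eq_lintegral_of_nonneg_ae hHnonneg hH, hlintegral, ENNReal.toReal_mul]
  norm_num

end HockeyStick

theorem stmt4_general {α : Type*} [MeasurableSpace α] (μ : Measure α) (f g : α → ℝ)
    (hf : Measurable f) (hg : Measurable g)
    (hf0 : ∀ x, 0 ≤ f x) (hg0 : ∀ x, 0 ≤ g x)
    (hfi : Integrable f μ) (hgi : Integrable g μ)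
    (hac : ∀ x, g x = 0 → f x = 0) :
    ∫ x, (f x - g x) ^ 2 / g x ∂μ
      = 2 * ∫ γ in Set.Ioi (1 : ℝ),
          ((∫ x, max (f x - γ * g x) 0 ∂μ)
            + γ ^ (-(3 : ℝ)) * ∫ x, max (g x - γ * f x) 0 ∂μ) := by
  obtain ⟨t, -, ht, _⟩ := (hfi.add hgi).exists_set_sigmaFinite (hf.add hg).stronglyMeasurable
  have hft : ∀ x ∉ t, f x = 0 := fun x hx => by
    linarith [ht x hx, hf0 x, hg0 x, Pi.add_apply f g x]
  have hgt : ∀ x ∉ t, g x = 0 := fun x hx => by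
    linarith [ht x hx, hf0 x, hg0 x, Pi.add_apply f g x]
  have key := integral_chiSq_eq_two_mul_integral_hockeyStick (μ := μ.restrict t) hf hg hf0 hg0
    hfi.restrict hgi.restrict hac
  rw [setIntegral_eq_integral_of_forall_compl_eq_zero fun x hx => by simp [hft x hx, hgt x hx]]
    at key
  simp only [hockeyStick_restrict hft hgt, hockeyStick_restrict hgt hft] at key
  exact key

/-- Integral representation of the chi-squared divergence in terms of
hockey-stick divergences: for probability measures M ≪ N with densities f, g
with respect to a common dominating measure μ,
χ²(M‖N) = 2∫₁^∞ [E_γ(M‖N) + γ^{-3} E_γ(N‖M)] dγ, where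
χ²(M‖N) = ∫ (f - g)²/g dμ and E_γ(M‖N) = ∫ (f - γ g)₊ dμ. -/
theorem stmt4 {α : Type*} [MeasurableSpace α] (μ : Measure α) (f g : α → ℝ)
    (hf : Measurable f) (hg : Measurable g)
    (hf0 : ∀ x, 0 ≤ f x) (hg0 : ∀ x, 0 ≤ g x)
    (hfi : Integrable f μ) (hgi : Integrable g μ)
    (hf1 : ∫ x, f x ∂μ = 1) (hg1 : ∫ x, g x ∂μ = 1)
    (hac : ∀ x, g x = 0 → f x = 0) :
    ∫ x, (f x - g x) ^ 2 / g x ∂μ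
      = 2 * ∫ γ in Set.Ioi (1 : ℝ),
          ((∫ x, max (f x - γ * g x) 0 ∂μ)
            + γ ^ (-(3 : ℝ)) * ∫ x, max (g x - γ * f x) 0 ∂μ) :=
  stmt4_general μ f g hf hg hf0 hg0 hfi hgi hac
end

section
/- Let M, N be probability measures with E_{e^ε}(M‖N) = 0 and E_{e^ε}(N‖M) = 0 for some ε > 0. Then H²(M,N) ≤ 2·(e^{ε/2}-1)²/(e^ε-1) · TV(M,N). -/
open MeasureTheory

lemma pt_half (K s t : ℝ) (hK : 1 < K) (hst : t ≤ s) (hKt : s ≤ K * t) :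
    (s - t) ^ 2 ≤ (K - 1) / (K + 1) * (s ^ 2 - t ^ 2) := by
  rw [div_mul_eq_mul_div, le_div_iff₀ (by linarith : (0:ℝ) < K + 1)]
  nlinarith [mul_nonneg (sub_nonneg.2 hst) (sub_nonneg.2 hKt)]

lemma pt (K a b : ℝ) (hK : 1 < K) (ha : 0 ≤ a) (hb : 0 ≤ b)
    (hab : a ≤ K ^ 2 * b) (hba : b ≤ K ^ 2 * a) :
    (Real.sqrt a - Real.sqrt b) ^ 2 ≤ (K - 1) / (K + 1) * |a - b| := by
  have hK0 : (0:ℝ) ≤ K := by linarith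
  have key : ∀ a b : ℝ, 0 ≤ a → 0 ≤ b → a ≤ K ^ 2 * b → b ≤ a →
      (Real.sqrt a - Real.sqrt b) ^ 2 ≤ (K - 1) / (K + 1) * (a - b) := by
    intro a b ha hb hab hba
    have hKt : Real.sqrt a ≤ K * Real.sqrt b := by
      have := Real.sqrt_le_sqrt hab
      rwa [Real.sqrt_mul (sq_nonneg K), Real.sqrt_sq hK0] at this
    have := pt_half K (Real.sqrt a) (Real.sqrt b) hK (Real.sqrt_le_sqrt hba) hKt
    rwa [Real.sq_sqrt ha, Real.sq_sqrt hb] at this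
  rcases le_total b a with h | h
  · rw [abs_of_nonneg (by linarith)]; exact key a b ha hb hab h
  · rw [abs_of_nonpos (by linarith), neg_sub]
    have := key b a hb ha hba h
    linarith [this]

/-- If E_{e^ε}(M‖N) = 0 and E_{e^ε}(N‖M) = 0, then
H²(M,N) ≤ 2(e^{ε/2}-1)²/(e^ε-1) · TV(M,N). Here M, N are probability measures
with densities f, g w.r.t. μ, H²(M,N) = ∫ (√f - √g)² dμ,
E_γ(M‖N) = ∫ (f - γ g)₊ dμ, and TV(M,N) = (1/2)∫ |f - g| dμ. -/
theorem stmt6 {α : Type*} [MeasurableSpace α] (μ : Measure α) (f g : α → ℝ)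
    (hf : Measurable f) (hg : Measurable g)
    (hf0 : ∀ x, 0 ≤ f x) (hg0 : ∀ x, 0 ≤ g x)
    (hfi : Integrable f μ) (hgi : Integrable g μ)
    (hf1 : ∫ x, f x ∂μ = 1) (hg1 : ∫ x, g x ∂μ = 1)
    (ε : ℝ) (hε : 0 < ε)
    (hMN : ∫ x, max (f x - Real.exp ε * g x) 0 ∂μ = 0)
    (hNM : ∫ x, max (g x - Real.exp ε * f x) 0 ∂μ = 0) :
    ∫ x, (Real.sqrt (f x) - Real.sqrt (g x)) ^ 2 ∂μ
      ≤ 2 * (Real.exp (ε / 2) - 1) ^ 2 / (Real.exp ε - 1)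
          * ((1 / 2) * ∫ x, |f x - g x| ∂μ) := by
  set K := Real.exp (ε / 2) with hKdef
  have hK : 1 < K := by
    rw [hKdef, ← Real.exp_zero]
    exact Real.exp_lt_exp.mpr (by linarith)
  have hK2 : K ^ 2 = Real.exp ε := by
    rw [hKdef, sq, ← Real.exp_add]
    ring_nf
  -- a.e. bounds from zero divergences
  have hae : ∀ (a b : α → ℝ), Integrable a μ → Integrable b μ →
      (∫ x, max (a x - Real.exp ε * b x) 0 ∂μ = 0) →
      ∀ᵐ x ∂μ, a x ≤ Real.exp ε * b x := by
    intro a b hai hbi h0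
    have hint : Integrable (fun x => max (a x - Real.exp ε * b x) 0) μ :=
      (hai.sub (hbi.const_mul _)).pos_part
    have := (integral_eq_zero_iff_of_nonneg (fun x => le_max_right _ _) hint).mp h0
    filter_upwards [this] with x hx
    have : max (a x - Real.exp ε * b x) 0 = 0 := hx
    have := le_max_left (a x - Real.exp ε * b x) 0
    linarith [this.trans_eq hx]
  have h1 := hae f g hfi hgi hMN
  have h2 := hae g f hgi hfi hNM
  have hptw : ∀ᵐ x ∂μ, (Real.sqrt (f x) - Real.sqrt (g x)) ^ 2
      ≤ (K - 1) / (K + 1) * |f x - g x| := by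
    filter_upwards [h1, h2] with x hx1 hx2
    exact pt K (f x) (g x) hK (hf0 x) (hg0 x) (by rw [hK2]; exact hx1) (by rw [hK2]; exact hx2)
  have habs : Integrable (fun x => |f x - g x|) μ := (hfi.sub hgi).abs
  have hLHSi : Integrable (fun x => (Real.sqrt (f x) - Real.sqrt (g x)) ^ 2) μ := by
    refine Integrable.mono' (hfi.add hgi)
      (((hf.sqrt.sub hg.sqrt).pow_const 2).aestronglyMeasurable) ?_
    filter_upwards with x
    rw [Real.norm_eq_abs, abs_of_nonneg (sq_nonneg (Real.sqrt (f x) - Real.sqrt (g x)))]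
    show _ ≤ f x + g x
    have h1 := Real.sq_sqrt (hf0 x)
    have h2 := Real.sq_sqrt (hg0 x)
    nlinarith [mul_nonneg (Real.sqrt_nonneg (f x)) (Real.sqrt_nonneg (g x))]
  have hmono : ∫ x, (Real.sqrt (f x) - Real.sqrt (g x)) ^ 2 ∂μ
      ≤ ∫ x, (K - 1) / (K + 1) * |f x - g x| ∂μ :=
    integral_mono_ae hLHSi (habs.const_mul _) hptw
  rw [integral_const_mul] at hmono
  refine hmono.trans_eq ?_
  have hne1 : K + 1 ≠ 0 := by linarith
  have hne3 : K - 1 ≠ 0 := by linarith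
  rw [← hK2, show K ^ 2 - 1 = (K + 1) * (K - 1) by ring]
  field_simp
end

section
/- Let M, N be probability measures such that E_{e^ε}(M‖N) = 0 and E_{e^ε}(N‖M) = 0 for some ε > 0. Then χ²(M‖N) ≤ e^{-ε}(e^ε-1)(e^ε+1)·TV(M,N), and consequently χ²(M‖N) ≤ e^{-ε}(e^ε-1)², since TV(M,N) ≤ (e^ε-1)/(e^ε+1) under these constraints. -/
/-!
The two vanishing hockey-stick divergences say exactly that `e^{-ε} g ≤ f ≤ e^ε g` a.e.
Under this constraint `(f - g)² / g = |f - g| · |f / g - 1|` is pointwise at most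
`(e^ε - 1) (f - g)₊ + (1 - e^{-ε}) (g - f)₊`, and since `M` and `N` have equal mass both
`(f - g)₊` and `(g - f)₊` integrate to `TV(M, N)`, which gives the first bound. Likewise
`|f - g| ≤ (e^ε - 1) / (e^ε + 1) · (f + g)` pointwise, which integrates to the bound on `TV`.
-/

open MeasureTheory

section Pointwise

variable {e a b : ℝ}

lemma nonneg_of_le_mul_of_le_mul (he : 1 < e) (hab : a ≤ e * b) (hba : b ≤ e * a) :
    0 ≤ a := by
  have : a ≤ e * e * a := by nlinarith
  nlinarith [mul_lt_mul_of_pos_left he (by linarith : (0:ℝ) < e)]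

lemma sq_sub_div_le_of_le_mul (he : 1 < e) (hab : a ≤ e * b) (hba : b ≤ e * a) :
    (a - b) ^ 2 / b ≤ (e - 1) * max (a - b) 0 + (1 - e⁻¹) * max (b - a) 0 := by
  have hb : 0 ≤ b := nonneg_of_le_mul_of_le_mul he hba hab
  rcases hb.eq_or_lt with rfl | hb
  · obtain rfl : a = 0 := le_antisymm (by simpa using hab) (nonneg_of_le_mul_of_le_mul he hab hba)
    simp
  rcases le_total b a with h | h
  · rw [max_eq_left (sub_nonneg.2 h), max_eq_right (sub_nonpos.2 h), div_le_iff₀ hb]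
    nlinarith
  · have hinv : e⁻¹ * b ≤ a := by rwa [inv_mul_le_iff₀ (by linarith)]
    rw [max_eq_right (sub_nonpos.2 h), max_eq_left (sub_nonneg.2 h), div_le_iff₀ hb]
    nlinarith [mul_le_mul_of_nonneg_right hinv (sub_nonneg.2 h)]

lemma abs_sub_le_of_le_mul (he : 1 < e) (hab : a ≤ e * b) (hba : b ≤ e * a) :
    |a - b| ≤ (e - 1) / (e + 1) * (a + b) := by
  rw [div_mul_eq_mul_div, le_div_iff₀ (by linarith)]
  rcases le_total b a with h | h
  · rw [abs_of_nonneg (sub_nonneg.2 h)]; linarith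
  · rw [abs_of_nonpos (sub_nonpos.2 h)]; linarith

end Pointwise

section Integral

variable {α : Type*} [MeasurableSpace α] {μ : Measure α} {f g : α → ℝ}

lemma ae_le_mul_of_integral_max_sub_mul_eq_zero (hf : Integrable f μ) (hg : Integrable g μ)
    {c : ℝ} (h : ∫ x, max (f x - c * g x) 0 ∂μ = 0) : ∀ᵐ x ∂μ, f x ≤ c * g x := by
  have hi : Integrable (fun x => max (f x - c * g x) 0) μ := (hf.sub (hg.const_mul c)).pos_part
  filter_upwards [(integral_eq_zero_iff_of_nonneg (fun x => le_max_right _ _) hi).1 h] with x hx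
  exact sub_nonpos.1 ((le_max_left _ _).trans hx.le)

lemma integral_max_sub_zero_eq_half_integral_abs (hf : Integrable f μ) (hg : Integrable g μ)
    (hfg : ∫ x, f x ∂μ = ∫ x, g x ∂μ) :
    ∫ x, max (f x - g x) 0 ∂μ = (1 / 2) * ∫ x, |f x - g x| ∂μ := by
  have hmax : ∀ t : ℝ, max t 0 = (1 / 2) * (t + |t|) := fun t => by
    rcases le_total t 0 with h | h
    · rw [max_eq_right h, abs_of_nonpos h]; ring
    · rw [max_eq_left h, abs_of_nonneg h]; ring
  simp_rw [hmax]
  rw [integral_const_mul,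
    integral_add (f := fun x => f x - g x) (g := fun x => |f x - g x|) (hf.sub hg) (hf.sub hg).abs,
    integral_sub hf hg, hfg, sub_self, zero_add]

variable {e : ℝ} (he : 1 < e) (hf : Integrable f μ) (hg : Integrable g μ)
  (hfg : ∀ᵐ x ∂μ, f x ≤ e * g x) (hgf : ∀ᵐ x ∂μ, g x ≤ e * f x)
include he hf hg hfg hgf

lemma integral_sq_sub_div_le (hint : ∫ x, f x ∂μ = ∫ x, g x ∂μ) :
    ∫ x, (f x - g x) ^ 2 / g x ∂μ
      ≤ e⁻¹ * (e - 1) * (e + 1) * ((1 / 2) * ∫ x, |f x - g x| ∂μ) := by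
  have hpos : Integrable (fun x => max (f x - g x) 0) μ := (hf.sub hg).pos_part
  have hneg : Integrable (fun x => max (g x - f x) 0) μ := (hg.sub hf).pos_part
  have hbound := (hpos.const_mul (e - 1)).add (hneg.const_mul (1 - e⁻¹))
  have hle : ∀ᵐ x ∂μ, (f x - g x) ^ 2 / g x
      ≤ (e - 1) * max (f x - g x) 0 + (1 - e⁻¹) * max (g x - f x) 0 := by
    filter_upwards [hfg, hgf] with x h₁ h₂
    exact sq_sub_div_le_of_le_mul he h₁ h₂
  have hchi : Integrable (fun x => (f x - g x) ^ 2 / g x) μ := by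
    refine hbound.mono' ((((hf.sub hg).aemeasurable.pow_const 2).div
      hg.aemeasurable).aestronglyMeasurable) ?_
    filter_upwards [hle, hfg, hgf] with x hx h₁ h₂
    have hg0 := nonneg_of_le_mul_of_le_mul he h₂ h₁
    rwa [Real.norm_of_nonneg (by positivity)]
  calc ∫ x, (f x - g x) ^ 2 / g x ∂μ
      ≤ ∫ x, (e - 1) * max (f x - g x) 0 + (1 - e⁻¹) * max (g x - f x) 0 ∂μ :=
        integral_mono_ae hchi hbound hle
    _ = (e - 1) * ((1 / 2) * ∫ x, |f x - g x| ∂μ)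
          + (1 - e⁻¹) * ((1 / 2) * ∫ x, |f x - g x| ∂μ) := by
        rw [integral_add (hpos.const_mul _) (hneg.const_mul _), integral_const_mul,
          integral_const_mul, integral_max_sub_zero_eq_half_integral_abs hf hg hint,
          integral_max_sub_zero_eq_half_integral_abs hg hf hint.symm]
        simp_rw [abs_sub_comm (g _)]
    _ = e⁻¹ * (e - 1) * (e + 1) * ((1 / 2) * ∫ x, |f x - g x| ∂μ) := by
        field_simp

lemma integral_abs_sub_le :
    ∫ x, |f x - g x| ∂μ ≤ (e - 1) / (e + 1) * (∫ x, f x ∂μ + ∫ x, g x ∂μ) := by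
  rw [← integral_add hf hg, ← integral_const_mul]
  refine integral_mono_ae (hf.sub hg).abs ((hf.add hg).const_mul _) ?_
  filter_upwards [hfg, hgf] with x h₁ h₂
  exact abs_sub_le_of_le_mul he h₁ h₂

end Integral

-- `M`, `N` have densities `f`, `g` with respect to `μ`; `χ²(M‖N) = ∫ (f - g)² / g dμ`,
-- `E_γ(M‖N) = ∫ (f - γ g)₊ dμ` and `TV(M, N) = ½ ∫ |f - g| dμ`.
theorem stmt7_general {α : Type*} [MeasurableSpace α] (μ : Measure α) (f g : α → ℝ)
    (hfi : Integrable f μ) (hgi : Integrable g μ)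
    (hf1 : ∫ x, f x ∂μ = 1) (hg1 : ∫ x, g x ∂μ = 1)
    (ε : ℝ) (hε : 0 < ε)
    (hMN : ∫ x, max (f x - Real.exp ε * g x) 0 ∂μ = 0)
    (hNM : ∫ x, max (g x - Real.exp ε * f x) 0 ∂μ = 0) :
    (∫ x, (f x - g x) ^ 2 / g x ∂μ)
        ≤ Real.exp (-ε) * (Real.exp ε - 1) * (Real.exp ε + 1)
            * ((1 / 2) * ∫ x, |f x - g x| ∂μ)
    ∧ (∫ x, (f x - g x) ^ 2 / g x ∂μ) ≤ Real.exp (-ε) * (Real.exp ε - 1) ^ 2 := by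
  have he : 1 < Real.exp ε := Real.one_lt_exp_iff.2 hε
  have hfg := ae_le_mul_of_integral_max_sub_mul_eq_zero hfi hgi hMN
  have hgf := ae_le_mul_of_integral_max_sub_mul_eq_zero hgi hfi hNM
  have hchi := integral_sq_sub_div_le he hfi hgi hfg hgf (hf1.trans hg1.symm)
  rw [← Real.exp_neg] at hchi
  refine ⟨hchi, hchi.trans ?_⟩
  have htv := integral_abs_sub_le he hfi hgi hfg hgf
  rw [hf1, hg1] at htv
  calc Real.exp (-ε) * (Real.exp ε - 1) * (Real.exp ε + 1) * ((1 / 2) * ∫ x, |f x - g x| ∂μ)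
      ≤ Real.exp (-ε) * (Real.exp ε - 1) * (Real.exp ε + 1)
          * ((Real.exp ε - 1) / (Real.exp ε + 1)) := by gcongr; linarith
    _ = Real.exp (-ε) * (Real.exp ε - 1) ^ 2 := by field_simp

/-- If E_{e^ε}(M‖N) = 0 and E_{e^ε}(N‖M) = 0, then
χ²(M‖N) ≤ e^{-ε}(e^ε-1)(e^ε+1)·TV(M,N), and consequently
χ²(M‖N) ≤ e^{-ε}(e^ε-1)² (since TV(M,N) ≤ (e^ε-1)/(e^ε+1)). Here M, N are
probability measures with densities f, g w.r.t. μ, χ²(M‖N) = ∫ (f-g)²/g dμ,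
E_γ(M‖N) = ∫ (f - γ g)₊ dμ, and TV(M,N) = (1/2)∫ |f - g| dμ. -/
theorem stmt7 {α : Type*} [MeasurableSpace α] (μ : Measure α) (f g : α → ℝ)
    (hf : Measurable f) (hg : Measurable g)
    (hf0 : ∀ x, 0 ≤ f x) (hg0 : ∀ x, 0 ≤ g x)
    (hfi : Integrable f μ) (hgi : Integrable g μ)
    (hf1 : ∫ x, f x ∂μ = 1) (hg1 : ∫ x, g x ∂μ = 1)
    (ε : ℝ) (hε : 0 < ε)
    (hMN : ∫ x, max (f x - Real.exp ε * g x) 0 ∂μ = 0)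
    (hNM : ∫ x, max (g x - Real.exp ε * f x) 0 ∂μ = 0) :
    (∫ x, (f x - g x) ^ 2 / g x ∂μ)
        ≤ Real.exp (-ε) * (Real.exp ε - 1) * (Real.exp ε + 1)
            * ((1 / 2) * ∫ x, |f x - g x| ∂μ)
    ∧ (∫ x, (f x - g x) ^ 2 / g x ∂μ) ≤ Real.exp (-ε) * (Real.exp ε - 1) ^ 2 :=
  stmt7_general μ f g hfi hgi hf1 hg1 ε hε hMN hNM
end

section
/- Let K be a binary-output mechanism defined by K(0|x) = e^ε/(1+e^ε) if P(x) ≥ Q(x) and K(0|x) = 1/(1+e^ε) otherwise, where P, Q are probability distributions on a finite set X. Then χ²(PK‖QK) ≤ e^{-ε}(e^ε-1)²·TV(P,Q)². -/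
open Finset

/-- For the binary mechanism K with K(0|x) = e^ε/(1+e^ε) if P(x) ≥ Q(x) and
K(0|x) = 1/(1+e^ε) otherwise, the output distributions are Bernoulli with
parameters pK = ζ P(Aᶜ) + (1-ζ) P(A) and qK = ζ Q(Aᶜ) + (1-ζ) Q(A),
where ζ = e^ε/(1+e^ε) and A = {x : P(x) ≥ Q(x)}, and
χ²(PK‖QK) = (pK-qK)²/(qK(1-qK)) ≤ e^{-ε}(e^ε-1)² TV(P,Q)². -/
theorem stmt10 {X : Type*} [Fintype X] [DecidableEq X] (ε : ℝ) (hε : 0 ≤ ε)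
    (P Q : X → ℝ) (hP0 : ∀ x, 0 ≤ P x) (hQ0 : ∀ x, 0 ≤ Q x)
    (hP1 : ∑ x, P x = 1) (hQ1 : ∑ x, Q x = 1) :
    let ζ : ℝ := Real.exp ε / (1 + Real.exp ε)
    let A : Finset X := Finset.univ.filter (fun x => Q x ≤ P x)
    let pK : ℝ := ζ * ∑ x ∈ Aᶜ, P x + (1 - ζ) * ∑ x ∈ A, P x
    let qK : ℝ := ζ * ∑ x ∈ Aᶜ, Q x + (1 - ζ) * ∑ x ∈ A, Q x
    let tv : ℝ := (1 / 2) * ∑ x, |P x - Q x|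
    (pK - qK) ^ 2 / (qK * (1 - qK)) ≤ Real.exp (-ε) * (Real.exp ε - 1) ^ 2 * tv ^ 2 := by
  intro ζ A pK qK tv
  have he1 : 1 ≤ Real.exp ε := Real.one_le_exp hε
  set e := Real.exp ε with he_def
  have hepos : 0 < e := by positivity
  have h1e : 0 < 1 + e := by linarith
  have haA : ∑ x ∈ A, P x + ∑ x ∈ Aᶜ, P x = 1 := by
    rw [Finset.sum_add_sum_compl]; exact hP1
  have hbA : ∑ x ∈ A, Q x + ∑ x ∈ Aᶜ, Q x = 1 := by
    rw [Finset.sum_add_sum_compl]; exact hQ1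
  set a := ∑ x ∈ A, P x with ha_def
  set b := ∑ x ∈ A, Q x with hb_def
  have hb0 : 0 ≤ b := Finset.sum_nonneg fun x _ => hQ0 x
  have hb1 : b ≤ 1 := by
    have : (0:ℝ) ≤ ∑ x ∈ Aᶜ, Q x := Finset.sum_nonneg fun x _ => hQ0 x
    linarith
  have htv : tv = a - b := by
    have h1 : ∑ x ∈ A, |P x - Q x| = ∑ x ∈ A, (P x - Q x) := by
      refine Finset.sum_congr rfl fun x hx => ?_
      simp only [A, Finset.mem_filter] at hx
      rw [abs_of_nonneg]; linarith [hx.2]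
    have h2 : ∑ x ∈ Aᶜ, |P x - Q x| = ∑ x ∈ Aᶜ, (Q x - P x) := by
      refine Finset.sum_congr rfl fun x hx => ?_
      simp only [A, Finset.mem_compl, Finset.mem_filter, Finset.mem_univ, true_and,
        not_le] at hx
      rw [abs_of_nonpos (by linarith)]; ring
    have h3 : ∑ x, |P x - Q x| = ∑ x ∈ A, |P x - Q x| + ∑ x ∈ Aᶜ, |P x - Q x| :=
      (Finset.sum_add_sum_compl A _).symm
    have h4 : ∑ x ∈ A, (P x - Q x) = a - b := by rw [Finset.sum_sub_distrib]
    have h5 : ∑ x ∈ Aᶜ, (Q x - P x) = a - b := by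
      rw [Finset.sum_sub_distrib]; linarith
    simp only [tv, h3, h1, h2, h4, h5]; ring
  have hζ : ζ = e / (1 + e) := rfl
  have hζhalf : (1:ℝ)/2 ≤ ζ := by
    rw [hζ, div_le_div_iff₀ (by norm_num) h1e]; linarith
  have hζlt : ζ < 1 := by
    rw [hζ, div_lt_one h1e]; linarith
  have hpq : pK - qK = (1 - 2*ζ) * (a - b) := by
    have h1 : ∑ x ∈ Aᶜ, P x = 1 - a := by linarith
    have h2 : ∑ x ∈ Aᶜ, Q x = 1 - b := by linarith
    simp only [pK, qK, h1, h2]; ring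
  have hqK : qK = ζ + (1 - 2*ζ) * b := by
    have h2 : ∑ x ∈ Aᶜ, Q x = 1 - b := by linarith
    simp only [qK, h2]; ring
  have hq1 : qK ≤ ζ := by
    rw [hqK]; nlinarith [mul_nonneg hb0 (by linarith : (0:ℝ) ≤ 2*ζ - 1)]
  have hq2 : 1 - ζ ≤ qK := by
    rw [hqK]; nlinarith [mul_nonneg (by linarith : (0:ℝ) ≤ 1 - b) (by linarith : (0:ℝ) ≤ 2*ζ - 1)]
  have hden : ζ * (1 - ζ) ≤ qK * (1 - qK) := by
    nlinarith [mul_nonneg (sub_nonneg.2 hq1) (by linarith : (0:ℝ) ≤ ζ + qK - 1)]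
  have hζpos : 0 < ζ * (1 - ζ) := by nlinarith
  have step1 : (pK - qK) ^ 2 / (qK * (1 - qK)) ≤ (pK - qK) ^ 2 / (ζ * (1 - ζ)) :=
    div_le_div_of_nonneg_left (by positivity) hζpos hden
  refine step1.trans_eq ?_
  rw [hpq, htv, Real.exp_neg, ← he_def, hζ]
  field_simp
  ring
end

section
/- For any random variable Z ~ Binom(n, p) and any even integer h ≥ 2, E[(Z - np)^h] ≤ h! · max(1, (h/(np))^{-h/2}) · e^h. -/
lemma aux_pow_le_factorial_mul_cosh (m : ℕ) (y : ℝ) :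
    y ^ (2 * m) ≤ ((2 * m).factorial : ℝ) * Real.cosh y := by
  have hs := Real.hasSum_cosh y
  have h := le_hasSum hs m (fun j _ =>
    div_nonneg (Even.pow_nonneg ⟨j, by ring⟩ y) (by positivity))
  rw [div_le_iff₀ (by positivity)] at h
  linarith

lemma aux_exp_quad {t : ℝ} (ht : |t| ≤ 1) : Real.exp t ≤ 1 + t + t ^ 2 := by
  have hb := Real.exp_bound ht (by norm_num : 0 < 2)
  have h1 := (abs_sub_le_iff.1 hb).1
  have hsum : ∑ m ∈ Finset.range 2, t ^ m / (m.factorial : ℝ) = 1 + t := by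
    simp [Finset.sum_range_succ]
  rw [hsum] at h1
  have h2 : |t| ^ 2 = t ^ 2 := sq_abs t
  norm_num [h2] at h1
  nlinarith [sq_nonneg t]

lemma aux_mgf_le (n : ℕ) (p : ℝ) (hp0 : 0 ≤ p) (hp1 : p ≤ 1) (t : ℝ) :
    ∑ k ∈ Finset.range (n + 1),
      (n.choose k : ℝ) * p ^ k * (1 - p) ^ (n - k) * Real.exp (t * k)
      ≤ Real.exp ((n : ℝ) * p * (Real.exp t - 1)) := by
  have key : ∑ k ∈ Finset.range (n + 1),
      (n.choose k : ℝ) * p ^ k * (1 - p) ^ (n - k) * Real.exp (t * k)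
      = (p * Real.exp t + (1 - p)) ^ n := by
    rw [add_pow]
    refine Finset.sum_congr rfl fun k hk => ?_
    rw [mul_comm t (k : ℝ), Real.exp_nat_mul, mul_pow]
    ring
  rw [key]
  have h2 : p * Real.exp t + (1 - p) ≤ Real.exp (p * (Real.exp t - 1)) := by
    have := Real.add_one_le_exp (p * (Real.exp t - 1))
    linarith
  have h0 : 0 ≤ p * Real.exp t + (1 - p) := by
    have := Real.exp_pos t
    nlinarith
  calc (p * Real.exp t + (1 - p)) ^ n
      ≤ Real.exp (p * (Real.exp t - 1)) ^ n := pow_le_pow_left₀ h0 h2 n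
    _ = Real.exp ((n : ℝ) * (p * (Real.exp t - 1))) := (Real.exp_nat_mul _ n).symm
    _ = Real.exp ((n : ℝ) * p * (Real.exp t - 1)) := by ring_nf

lemma aux_central (n : ℕ) (p : ℝ) (hp0 : 0 ≤ p) (hp1 : p ≤ 1)
    (h : ℕ) (hhe : Even h) (t : ℝ) (ht0 : 0 ≤ t) (ht1 : t ≤ 1) :
    t ^ h * ∑ k ∈ Finset.range (n + 1),
        (n.choose k : ℝ) * p ^ k * (1 - p) ^ (n - k) * ((k : ℝ) - n * p) ^ h
      ≤ (h.factorial : ℝ) * Real.exp ((n : ℝ) * p * t ^ 2) := by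
  obtain ⟨m, hm⟩ := hhe
  have hm2 : h = 2 * m := by omega
  set s : ℝ := (n : ℝ) * p with hs
  have hs0 : 0 ≤ s := by positivity
  have habs : |t| ≤ 1 := by rwa [abs_of_nonneg ht0]
  have habs' : |(-t)| ≤ 1 := by rwa [abs_neg]
  -- pointwise bound
  have hw : ∀ k ∈ Finset.range (n + 1),
      0 ≤ (n.choose k : ℝ) * p ^ k * (1 - p) ^ (n - k) := by
    intro k _
    have : (0:ℝ) ≤ 1 - p := by linarith
    positivity
  have step1 : t ^ h * ∑ k ∈ Finset.range (n + 1),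
        (n.choose k : ℝ) * p ^ k * (1 - p) ^ (n - k) * ((k : ℝ) - n * p) ^ h
      ≤ ∑ k ∈ Finset.range (n + 1),
        (n.choose k : ℝ) * p ^ k * (1 - p) ^ (n - k)
          * ((h.factorial : ℝ) * Real.cosh (t * ((k : ℝ) - n * p))) := by
    rw [Finset.mul_sum]
    refine Finset.sum_le_sum fun k hk => ?_
    have hc : (t * ((k : ℝ) - n * p)) ^ h
        ≤ (h.factorial : ℝ) * Real.cosh (t * ((k : ℝ) - n * p)) := by
      rw [hm2]; exact aux_pow_le_factorial_mul_cosh m _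
    rw [mul_pow] at hc
    have := mul_le_mul_of_nonneg_left hc (hw k hk)
    linarith
  -- rewrite cosh as average of exponentials and bound by MGF
  have step2 : ∑ k ∈ Finset.range (n + 1),
        (n.choose k : ℝ) * p ^ k * (1 - p) ^ (n - k)
          * ((h.factorial : ℝ) * Real.cosh (t * ((k : ℝ) - n * p)))
      = (h.factorial : ℝ) * ((Real.exp (-(t * s)) *
          ∑ k ∈ Finset.range (n + 1),
            (n.choose k : ℝ) * p ^ k * (1 - p) ^ (n - k) * Real.exp (t * k)
        + Real.exp (t * s) *
          ∑ k ∈ Finset.range (n + 1),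
            (n.choose k : ℝ) * p ^ k * (1 - p) ^ (n - k) * Real.exp (-t * k)) / 2) := by
    rw [Finset.mul_sum, Finset.mul_sum, ← Finset.sum_add_distrib, Finset.sum_div,
      Finset.mul_sum]
    refine Finset.sum_congr rfl fun k hk => ?_
    have e1 : t * ((k : ℝ) - n * p) = t * k + (-(t * s)) := by rw [hs]; ring
    rw [Real.cosh_eq, e1, Real.exp_add, neg_add, Real.exp_add, neg_neg,
      show -(t * (k : ℝ)) = -t * (k : ℝ) by ring]
    ring
  have m1 := aux_mgf_le n p hp0 hp1 t
  have m2 := aux_mgf_le n p hp0 hp1 (-t)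
  have q1 : Real.exp t - 1 - t ≤ t ^ 2 := by
    have := aux_exp_quad habs; linarith
  have q2 : Real.exp (-t) - 1 + t ≤ t ^ 2 := by
    have := aux_exp_quad habs'; nlinarith [sq_nonneg t]
  have b1 : Real.exp (-(t * s)) *
      ∑ k ∈ Finset.range (n + 1),
        (n.choose k : ℝ) * p ^ k * (1 - p) ^ (n - k) * Real.exp (t * k)
      ≤ Real.exp (s * t ^ 2) := by
    calc Real.exp (-(t * s)) *
        ∑ k ∈ Finset.range (n + 1),
          (n.choose k : ℝ) * p ^ k * (1 - p) ^ (n - k) * Real.exp (t * k)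
        ≤ Real.exp (-(t * s)) * Real.exp (s * (Real.exp t - 1)) := by
          have : (n:ℝ) * p * (Real.exp t - 1) = s * (Real.exp t - 1) := by rw [hs]
          rw [← this]
          exact mul_le_mul_of_nonneg_left m1 (Real.exp_pos _).le
      _ = Real.exp (s * (Real.exp t - 1 - t)) := by rw [← Real.exp_add]; ring_nf
      _ ≤ Real.exp (s * t ^ 2) :=
          Real.exp_le_exp.2 (mul_le_mul_of_nonneg_left q1 hs0)
  have b2 : Real.exp (t * s) *
      ∑ k ∈ Finset.range (n + 1),
        (n.choose k : ℝ) * p ^ k * (1 - p) ^ (n - k) * Real.exp (-t * k)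
      ≤ Real.exp (s * t ^ 2) := by
    calc Real.exp (t * s) *
        ∑ k ∈ Finset.range (n + 1),
          (n.choose k : ℝ) * p ^ k * (1 - p) ^ (n - k) * Real.exp (-t * k)
        ≤ Real.exp (t * s) * Real.exp (s * (Real.exp (-t) - 1)) := by
          have : (n:ℝ) * p * (Real.exp (-t) - 1) = s * (Real.exp (-t) - 1) := by rw [hs]
          rw [← this]
          exact mul_le_mul_of_nonneg_left m2 (Real.exp_pos _).le
      _ = Real.exp (s * (Real.exp (-t) - 1 + t)) := by rw [← Real.exp_add]; ring_nf
      _ ≤ Real.exp (s * t ^ 2) :=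
          Real.exp_le_exp.2 (mul_le_mul_of_nonneg_left q2 hs0)
  have hfac : (0:ℝ) ≤ (h.factorial : ℝ) := by positivity
  calc t ^ h * ∑ k ∈ Finset.range (n + 1),
        (n.choose k : ℝ) * p ^ k * (1 - p) ^ (n - k) * ((k : ℝ) - n * p) ^ h
      ≤ _ := step1
    _ = _ := step2
    _ ≤ (h.factorial : ℝ) * ((Real.exp (s * t ^ 2) + Real.exp (s * t ^ 2)) / 2) := by
        apply mul_le_mul_of_nonneg_left _ hfac
        apply div_le_div_of_nonneg_right _ (by norm_num)
        · exact add_le_add b1 b2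
    _ = (h.factorial : ℝ) * Real.exp ((n : ℝ) * p * t ^ 2) := by rw [hs]; ring_nf

/-- For Z ~ Binom(n,p) and any even integer h ≥ 2,
E[(Z - np)^h] ≤ h! · max(1, (h/(np))^{-h/2}) · e^h. -/
theorem stmt12 (n : ℕ) (p : ℝ) (hp0 : 0 ≤ p) (hp1 : p ≤ 1)
    (h : ℕ) (hh2 : 2 ≤ h) (hhe : Even h) :
    ∑ k ∈ Finset.range (n + 1),
        (n.choose k : ℝ) * p ^ k * (1 - p) ^ (n - k) * ((k : ℝ) - n * p) ^ h
      ≤ (h.factorial : ℝ)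
          * max 1 (((h : ℝ) / ((n : ℝ) * p)) ^ (-(h : ℝ) / 2))
          * Real.exp h := by
  set s : ℝ := (n : ℝ) * p with hs
  have hs0 : 0 ≤ s := by positivity
  have hfac : (0:ℝ) ≤ (h.factorial : ℝ) := by positivity
  by_cases hcase : s ≤ (h : ℝ)
  · -- take t = 1
    have hc := aux_central n p hp0 hp1 h hhe 1 zero_le_one le_rfl
    rw [one_pow, one_mul] at hc
    have : (h.factorial : ℝ) * Real.exp ((n : ℝ) * p * 1 ^ 2)
        ≤ (h.factorial : ℝ) * max 1 (((h : ℝ) / ((n : ℝ) * p)) ^ (-(h : ℝ) / 2))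
          * Real.exp h := by
      have h1 : Real.exp ((n : ℝ) * p * 1 ^ 2) ≤ Real.exp h := by
        apply Real.exp_le_exp.2; rw [← hs] at *; nlinarith
      have h2 : (1:ℝ) ≤ max 1 (((h : ℝ) / ((n : ℝ) * p)) ^ (-(h : ℝ) / 2)) :=
        le_max_left _ _
      calc (h.factorial : ℝ) * Real.exp ((n : ℝ) * p * 1 ^ 2)
          ≤ (h.factorial : ℝ) * Real.exp h := mul_le_mul_of_nonneg_left h1 hfac
        _ = ((h.factorial : ℝ) * 1) * Real.exp h := by ring
        _ ≤ ((h.factorial : ℝ) * max 1 (((h : ℝ) / ((n : ℝ) * p)) ^ (-(h : ℝ) / 2)))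
              * Real.exp h :=
            mul_le_mul_of_nonneg_right (mul_le_mul_of_nonneg_left h2 hfac)
              (Real.exp_pos _).le
    rw [← hs] at hc this
    exact hc.trans this
  · -- s > h ≥ 2 > 0 ; take t = sqrt (h / s)
    push_neg at hcase
    have hh0 : (0:ℝ) < (h : ℝ) := by exact_mod_cast Nat.lt_of_lt_of_le Nat.zero_lt_two hh2
    have hs' : (0:ℝ) < s := lt_trans hh0 hcase
    set r : ℝ := (h : ℝ) / s with hr
    have hr0 : 0 < r := div_pos hh0 hs'
    have hr1 : r ≤ 1 := by rw [hr, div_le_one hs']; linarith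
    set t : ℝ := Real.sqrt r with htdef
    have ht0 : 0 ≤ t := Real.sqrt_nonneg r
    have ht1 : t ≤ 1 := by
      rw [htdef, show (1:ℝ) = Real.sqrt 1 from (Real.sqrt_one).symm]
      exact Real.sqrt_le_sqrt hr1
    have hsq : t ^ 2 = r := Real.sq_sqrt hr0.le
    have hc := aux_central n p hp0 hp1 h hhe t ht0 ht1
    rw [← hs, hsq] at hc
    have hsr : s * r = h := by rw [hr]; field_simp
    rw [hsr] at hc
    have hth : t ^ h = r ^ ((h : ℝ) / 2) := by
      rw [htdef, Real.sqrt_eq_rpow, ← Real.rpow_natCast (r ^ (1/2 : ℝ)) h,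
        ← Real.rpow_mul hr0.le]
      congr 1
      ring
    have hexp_nonpos : -(h : ℝ) / 2 ≤ 0 := by
      rw [neg_div]; exact neg_nonpos.2 (by positivity)
    have hmax : max 1 (r ^ (-(h : ℝ) / 2)) = r ^ (-(h : ℝ) / 2) :=
      max_eq_right (Real.one_le_rpow_of_pos_of_le_one_of_nonpos hr0 hr1 hexp_nonpos)
    have hpos : (0:ℝ) < r ^ ((h : ℝ) / 2) := Real.rpow_pos_of_pos hr0 _
    have hinv : r ^ (-(h : ℝ) / 2) = (r ^ ((h : ℝ) / 2))⁻¹ := by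
      rw [neg_div, Real.rpow_neg hr0.le]
    rw [hmax, hinv, ← hth]
    rw [hth] at hc
    have hstep : ∑ k ∈ Finset.range (n + 1),
        (n.choose k : ℝ) * p ^ k * (1 - p) ^ (n - k) * ((k : ℝ) - s) ^ h
        ≤ ((h.factorial : ℝ) * Real.exp h) / (r ^ ((h : ℝ) / 2)) := by
      rw [le_div_iff₀ hpos]
      calc (∑ k ∈ Finset.range (n + 1),
          (n.choose k : ℝ) * p ^ k * (1 - p) ^ (n - k) * ((k : ℝ) - s) ^ h)
            * r ^ ((h : ℝ) / 2)
          = r ^ ((h : ℝ) / 2) * ∑ k ∈ Finset.range (n + 1),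
            (n.choose k : ℝ) * p ^ k * (1 - p) ^ (n - k) * ((k : ℝ) - s) ^ h := by ring
        _ ≤ (h.factorial : ℝ) * Real.exp h := hc
    calc ∑ k ∈ Finset.range (n + 1),
        (n.choose k : ℝ) * p ^ k * (1 - p) ^ (n - k) * ((k : ℝ) - s) ^ h
        ≤ ((h.factorial : ℝ) * Real.exp h) / (r ^ ((h : ℝ) / 2)) := hstep
      _ = (h.factorial : ℝ) * (t ^ h)⁻¹ * Real.exp h := by
          rw [hth, div_eq_mul_inv]; ring
end
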